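/- Let p ≥ 1 and let μ ∈ ℝ^p satisfy μ_i − μ_j ∈ ℤ for all i, j and 2μ_i ∈ ℤ for all i (μ is an integral weight of B_p). Set ν = μ + ρ where ρ_i = p − i + ½. Then the following are equivalent: (a) for every permutation σ of {1,…,p} and every choice of signs ε_1,…,ε_p ∈ {±1}, the number Σ_{i=1}^p (ε_i ν_{σ(i)} − ν_i) is an even integer; (b) 2μ_p is an odd integer. (Equivalently: 2(w(μ+ρ) − (μ+ρ), Λ_(p)) ∈ 2ℤ for every element w of the Weyl group of B_p, acting by signed permutations of coordinates, if and only if the Dynkin label (μ, β^(p)∨) = 2μ_p is an odd integer.) -/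
import Mathlib


/-!
STATEMENT 5: Let `μ ∈ ℝ^p` (coordinates `μ 1, …, μ p`) be an integral weight of `B_p`,
i.e. `μ i - μ j ∈ ℤ` and `2 μ i ∈ ℤ` for all `i, j ∈ {1, …, p}`. Set `ν = μ + ρ` with
`ρ i = p - i + ½`. Then the following are equivalent:
(a) for every permutation `σ` of `{1, …, p}` and all signs `ε i ∈ {±1}`, the number
`Σ_{i=1}^p (ε i · ν (σ i) - ν i)` is an even integer;
(b) `2 μ p` is an odd integer.
-/

noncomputable section

/-- `ν = μ + ρ`, where `ρ i = p - i + ½`. -/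
def nu (p : ℕ) (μ : ℕ → ℝ) : ℕ → ℝ := fun i => μ i + ((p : ℝ) - (i : ℝ) + 1 / 2)

theorem stmt5 (p : ℕ) (hp : 1 ≤ p) (μ : ℕ → ℝ)
    (hint : ∀ i ∈ Finset.Icc 1 p, ∀ j ∈ Finset.Icc 1 p, ∃ n : ℤ, μ i - μ j = (n : ℝ))
    (hhalf : ∀ i ∈ Finset.Icc 1 p, ∃ n : ℤ, 2 * μ i = (n : ℝ)) :
    (∀ σ : ℕ → ℕ, Set.BijOn σ (Set.Icc 1 p) (Set.Icc 1 p) →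
      ∀ ε : ℕ → ℝ, (∀ i, ε i = 1 ∨ ε i = -1) →
        ∃ n : ℤ, ∑ i ∈ Finset.Icc 1 p, (ε i * nu p μ (σ i) - nu p μ i) = 2 * (n : ℝ)) ↔
    (∃ n : ℤ, 2 * μ p = 2 * (n : ℝ) + 1) := by
  have hpmem : p ∈ Finset.Icc 1 p := Finset.mem_Icc.mpr ⟨hp, le_refl p⟩
  constructor
  · intro h
    classical
    obtain ⟨n, hn⟩ := h id (Set.bijOn_id _) (fun i => if i = p then (-1:ℝ) else 1)
      (fun i => by by_cases hi : i = p <;> simp [hi])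
    rw [Finset.sum_eq_single p (fun b _ hb => by simp [hb]) (fun hnp => absurd hpmem hnp)] at hn
    simp only [if_pos rfl, id_eq, nu] at hn
    refine ⟨-n - 1, ?_⟩
    push_cast at hn ⊢
    linarith
  · rintro ⟨n, hμ⟩ σ hσ ε hε
    classical
    have hk : ∀ i ∈ Finset.Icc 1 p, ∃ m : ℤ, nu p μ i = (m : ℝ) := by
      intro i hi
      obtain ⟨m, hm⟩ := hint i hi p hpmem
      refine ⟨n + m + p - i + 1, ?_⟩
      simp only [nu]
      push_cast
      linarith
    let k : ℕ → ℤ := fun i => if h : ∃ m : ℤ, nu p μ i = (m : ℝ) then h.choose else 0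
    have hkspec : ∀ i ∈ Finset.Icc 1 p, nu p μ i = (k i : ℝ) := by
      intro i hi
      have h := hk i hi
      simp only [k, dif_pos h]
      exact h.choose_spec
    have hmem : ∀ i ∈ Finset.Icc 1 p, σ i ∈ Finset.Icc 1 p := by
      intro i hi
      have h1 : σ i ∈ Set.Icc 1 p := hσ.mapsTo (by simpa [Set.mem_Icc] using Finset.mem_Icc.mp hi)
      exact Finset.mem_Icc.mpr (by simpa [Set.mem_Icc] using h1)
    let M : ℕ → ℤ := fun i => (if ε i = 1 then k (σ i) else -k (σ i)) - k i
    have hsum : ∑ i ∈ Finset.Icc 1 p, (ε i * nu p μ (σ i) - nu p μ i)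
        = ((∑ i ∈ Finset.Icc 1 p, M i : ℤ) : ℝ) := by
      push_cast
      refine Finset.sum_congr rfl (fun i hi => ?_)
      rw [hkspec (σ i) (hmem i hi), hkspec i hi]
      rcases hε i with h1 | h1
      · simp [M, h1]
      · have h2 : (if ε i = 1 then k (σ i) else -k (σ i)) = -k (σ i) := by
          rw [if_neg]; rw [h1]; norm_num
        simp only [M, h2, h1]
        push_cast
        rw [if_neg (by norm_num : ¬((-1:ℝ) = 1))]
        ring
    have hre : ∀ (f : ℕ → ZMod 2),
        ∑ i ∈ Finset.Icc 1 p, f (σ i) = ∑ i ∈ Finset.Icc 1 p, f i := by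
      intro f
      refine Finset.sum_bij (fun a _ => σ a) (fun a ha => hmem a ha) ?_ ?_ (fun a _ => rfl)
      · intro a ha b hb hab
        exact hσ.injOn (by simpa [Set.mem_Icc] using Finset.mem_Icc.mp ha)
          (by simpa [Set.mem_Icc] using Finset.mem_Icc.mp hb) hab
      · intro b hb
        obtain ⟨a, ha, hab⟩ := hσ.surjOn (by simpa [Set.mem_Icc] using Finset.mem_Icc.mp hb)
        exact ⟨a, Finset.mem_Icc.mpr (by simpa [Set.mem_Icc] using ha), hab⟩
    have heven : ((∑ i ∈ Finset.Icc 1 p, M i : ℤ) : ZMod 2) = 0 := by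
      push_cast
      have h1 : ∀ a b : ZMod 2, a - b = a + b := by decide
      have h2 : ∀ a b : ZMod 2, -a - b = a + b := by decide
      have hM2 : ∀ i, ((M i : ℤ) : ZMod 2) = (k (σ i) : ZMod 2) + (k i : ZMod 2) := by
        intro i
        simp only [M]
        split <;> push_cast
        · exact h1 _ _
        · exact h2 _ _
      rw [Finset.sum_congr rfl (fun i _ => hM2 i), Finset.sum_add_distrib,
        hre (fun i => (k i : ZMod 2))]
      have h3 : ∀ x : ZMod 2, x + x = 0 := by decide
      exact h3 _
    have hdvd : (2 : ℤ) ∣ ∑ i ∈ Finset.Icc 1 p, M i := by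
      have := (ZMod.intCast_zmod_eq_zero_iff_dvd (∑ i ∈ Finset.Icc 1 p, M i) 2).mp heven
      exact_mod_cast this
    obtain ⟨m, hm⟩ := hdvd
    refine ⟨m, ?_⟩
    rw [hsum, hm]
    push_cast
    ring

end
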